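/- Let m, n, i be positive natural numbers and let I_1, …, I_i be increasing monotonous polyominoes in R_{m×n}. Then there exist increasing monotonous polyominoes I'_1, …, I'_{i'} in R_{m×n} with 0 ≤ i' ≤ i, all fully defined on {0,…,m}, whose cell sets are pairwise disjoint, such that the union of the cell sets of I_1,…,I_i is contained in the union of the cell sets of I'_1,…,I'_{i'}. -/

import Mathlib

/-!
Extend every increasing polyomino to a nondecreasing profile `ℕ → ℕ`; its cells are then those of a
full increasing polyomino. If `n ≤ i`, the `n` horizontal rows already do the job. Otherwise replace
the `i` profiles by their pointwise order statistics `G₁ ≤ ⋯ ≤ G_i`: if the profile `F_b` covers the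
cell `(t, j)` and `a` profiles satisfy `F(t-1) ≤ j`, then `G_a` covers it too. Capping `G_a` at
`n - i + a` loses nothing, since a cell above the cap of `G_a` lies in a higher capped `G`. Finally
stack: `H_a(t) = max (G_a(t), H_{a-1}(t+1) + 1)` forces `H_{a-1}(t) < H_a(t-1)`, which is
disjointness, and a cell of `G_a` that `H_a` pushes away lies below `H_{a-1}(t)`, hence is caught by
a lower ribbon.
-/

/-- A monotonous polyomino in the lattice rectangle `R_{m×n}`, spanning columns
`r` to `s` (with `1 ≤ r ≤ s ≤ m`), encoded by a monotone function `P` taking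
values in `{1,…,n}` on `{r-1,…,s}`. -/
structure MonoPoly (m n : ℕ) where
  r : ℕ
  s : ℕ
  P : ℕ → ℕ
  one_le_r : 1 ≤ r
  r_le_s : r ≤ s
  s_le_m : s ≤ m
  val_mem : ∀ t, r - 1 ≤ t → t ≤ s → 1 ≤ P t ∧ P t ≤ n
  mono : (∀ t u, r - 1 ≤ t → t ≤ u → u ≤ s → P t ≤ P u) ∨
         (∀ t u, r - 1 ≤ t → t ≤ u → u ≤ s → P u ≤ P t)

/-- The cell set of a monotonous polyomino:
`{(t,j) : r ≤ t ≤ s, min(P(t-1),P(t)) ≤ j ≤ max(P(t-1),P(t))}`. -/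
def MonoPoly.cells {m n : ℕ} (Q : MonoPoly m n) : Set (ℕ × ℕ) :=
  {c | Q.r ≤ c.1 ∧ c.1 ≤ Q.s ∧
       min (Q.P (c.1 - 1)) (Q.P c.1) ≤ c.2 ∧
       c.2 ≤ max (Q.P (c.1 - 1)) (Q.P c.1)}

/-- A monotonous polyomino is increasing if its encoding function is
nondecreasing on `{r-1,…,s}`. -/
def MonoPoly.Increasing {m n : ℕ} (Q : MonoPoly m n) : Prop :=
  ∀ t u, Q.r - 1 ≤ t → t ≤ u → u ≤ Q.s → Q.P t ≤ Q.P u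

/-- A monotonous polyomino is decreasing if its encoding function is
nonincreasing on `{r-1,…,s}`. -/
def MonoPoly.Decreasing {m n : ℕ} (Q : MonoPoly m n) : Prop :=
  ∀ t u, Q.r - 1 ≤ t → t ≤ u → u ≤ Q.s → Q.P u ≤ Q.P t

/-- A monotonous polyomino is fully defined on `{0,…,m}` if `r = 1` and `s = m`. -/
def MonoPoly.Full {m n : ℕ} (Q : MonoPoly m n) : Prop :=
  Q.r = 1 ∧ Q.s = m

/-- `F` is a covering of `R_{m×n}` by `p` monotonous polyominoes: every cell
`(k,l)` with `1 ≤ k ≤ m`, `1 ≤ l ≤ n` belongs to some member of the family. -/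
def IsCovering (m n p : ℕ) (F : Fin p → MonoPoly m n) : Prop :=
  ∀ k l : ℕ, 1 ≤ k → k ≤ m → 1 ≤ l → l ≤ n → ∃ a, (k, l) ∈ (F a).cells

/-- An `(i,d)`-covering of `R_{m×n}`: `i` increasing and `d` decreasing
monotonous polyominoes whose cell sets together cover `{1,…,m}×{1,…,n}`. -/
def IsIDCovering (m n i d : ℕ) (F : Fin i → MonoPoly m n)
    (G : Fin d → MonoPoly m n) : Prop :=
  (∀ a, (F a).Increasing) ∧ (∀ b, (G b).Decreasing) ∧
  ∀ k l : ℕ, 1 ≤ k → k ≤ m → 1 ≤ l → l ≤ n →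
    (∃ a, (k, l) ∈ (F a).cells) ∨ (∃ b, (k, l) ∈ (G b).cells)

/-- The minimal number of monotonous polyominoes needed to cover `R_{m×n}`. -/
noncomputable def minCover (m n : ℕ) : ℕ :=
  sInf {p : ℕ | ∃ F : Fin p → MonoPoly m n, IsCovering m n p F}

/-- `m(n,i,d) ∈ ℕ∞`: the supremum of all `m` such that `R_{m×n}` admits an
`(i,d)`-covering. -/
noncomputable def mSup (n i d : ℕ) : ℕ∞ :=
  ⨆ m ∈ {m : ℕ | ∃ (F : Fin i → MonoPoly m n) (G : Fin d → MonoPoly m n),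
      IsIDCovering m n i d F G}, (m : ℕ∞)

/-- `f : ℕ → ℕ` encodes an increasing monotonous polyomino in `R_{m×n}` fully
defined on `{0,…,m}`: values in `{1,…,n}` and nondecreasing on `{0,…,m}`. -/
def IncFull (m n : ℕ) (f : ℕ → ℕ) : Prop :=
  (∀ t, t ≤ m → 1 ≤ f t ∧ f t ≤ n) ∧ (∀ t u, t ≤ u → u ≤ m → f t ≤ f u)

/-- The cell set of an increasing polyomino fully defined on `{0,…,m}`,
encoded by the nondecreasing function `f`. -/
def cellsFull (m : ℕ) (f : ℕ → ℕ) : Set (ℕ × ℕ) :=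
  {c | 1 ≤ c.1 ∧ c.1 ≤ m ∧ f (c.1 - 1) ≤ c.2 ∧ c.2 ≤ f c.1}

open Finset

namespace MonoPoly

variable {m n : ℕ} (Q : MonoPoly m n)

def extend (t : ℕ) : ℕ := Q.P (min (max t (Q.r - 1)) Q.s)

lemma extend_mem (t : ℕ) : 1 ≤ Q.extend t ∧ Q.extend t ≤ n :=
  Q.val_mem _ (le_min (le_max_right _ _) ((Nat.sub_le _ _).trans Q.r_le_s)) (min_le_right _ _)

lemma monotone_extend (hQ : Q.Increasing) : Monotone Q.extend := fun _ _ htu =>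
  hQ _ _ (le_min (le_max_right _ _) ((Nat.sub_le _ _).trans Q.r_le_s))
    (min_le_min_right _ (max_le_max_right _ htu)) (min_le_right _ _)

lemma extend_eq {t : ℕ} (h₁ : Q.r - 1 ≤ t) (h₂ : t ≤ Q.s) : Q.extend t = Q.P t := by
  rw [extend, max_eq_left h₁, min_eq_left h₂]

lemma cells_subset_cellsFull_extend (hQ : Q.Increasing) : Q.cells ⊆ cellsFull m Q.extend := by
  rintro ⟨t, j⟩ ⟨hrt, hts, hlo, hhi⟩
  have hle : Q.P (t - 1) ≤ Q.P t := hQ _ _ (by omega) (Nat.sub_le _ _) hts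
  rw [min_eq_left hle] at hlo
  rw [max_eq_right hle] at hhi
  refine ⟨Q.one_le_r.trans hrt, hts.trans Q.s_le_m, ?_, ?_⟩
  · rwa [Q.extend_eq (by omega) (by omega)]
  · rwa [Q.extend_eq (by omega) hts]

end MonoPoly

section FullPolyominoes

variable {m n : ℕ}

lemma cellsFull_subset_Icc_prod {f : ℕ → ℕ} (hf₁ : ∀ t, 1 ≤ f t) (hfn : ∀ t, f t ≤ n) :
    cellsFull m f ⊆ Set.Icc 1 m ×ˢ Set.Icc 1 n :=
  fun _ ⟨ht₁, htm, hlo, hhi⟩ => ⟨⟨ht₁, htm⟩, (hf₁ _).trans hlo, hhi.trans (hfn _)⟩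

lemma disjoint_cellsFull {f g : ℕ → ℕ} (h : ∀ t, 1 ≤ t → t ≤ m → f t < g (t - 1)) :
    Disjoint (cellsFull m f) (cellsFull m g) :=
  Set.disjoint_left.2 fun _ ⟨ht₁, htm, _, hf⟩ ⟨_, _, hg, _⟩ => by
    have := h _ ht₁ htm
    omega

def HasDisjointFullCover (m n : ℕ) (S : Set (ℕ × ℕ)) (k : ℕ) : Prop :=
  ∃ Q : Fin k → ℕ → ℕ, (∀ a, IncFull m n (Q a)) ∧
    (∀ a b, a ≠ b → Disjoint (cellsFull m (Q a)) (cellsFull m (Q b))) ∧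
    S ⊆ ⋃ a, cellsFull m (Q a)

lemma HasDisjointFullCover.mono {S T : Set (ℕ × ℕ)} {k : ℕ} (h : HasDisjointFullCover m n T k)
    (hST : S ⊆ T) : HasDisjointFullCover m n S k :=
  let ⟨Q, hQ, hdisj, hT⟩ := h
  ⟨Q, hQ, hdisj, hST.trans hT⟩

lemma hasDisjointFullCover_of_lt {S : Set (ℕ × ℕ)} {k : ℕ} (Q : Fin k → ℕ → ℕ)
    (hQ : ∀ a, IncFull m n (Q a))
    (hlt : ∀ a b, a < b → ∀ t, 1 ≤ t → t ≤ m → Q a t < Q b (t - 1))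
    (hS : S ⊆ ⋃ a, cellsFull m (Q a)) : HasDisjointFullCover m n S k :=
  ⟨Q, hQ, (pairwise_disjoint_on _).2 fun a b hab => disjoint_cellsFull (hlt a b hab), hS⟩

lemma hasDisjointFullCover_rows (m n : ℕ) :
    HasDisjointFullCover m n (Set.Icc 1 m ×ˢ Set.Icc 1 n) n := by
  refine hasDisjointFullCover_of_lt (fun a _ => a + 1)
    (fun a => ⟨fun _ _ => ⟨Nat.le_add_left 1 _, a.isLt⟩, fun _ _ _ _ => le_rfl⟩)
    (fun _ _ hab _ _ _ => by simpa using hab) ?_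
  rintro ⟨t, j⟩ ⟨⟨ht₁, htm⟩, hj₁, hjn⟩
  exact Set.mem_iUnion.2 ⟨⟨j - 1, by omega⟩, ht₁, htm, by simp; omega, by simp; omega⟩

end FullPolyominoes

section OrderStatistics

variable {ι : Type*} [Fintype ι] (F : ι → ℕ → ℕ)

def countLE (t v : ℕ) : ℕ := #{b | F b t ≤ v}

/-- For `1 ≤ a ≤ card ι`, the `a`-th smallest of the values `F b t`. Clamping `a` at `card ι`
makes it monotone in `a` for all `a`. -/
noncomputable def ordStat (a t : ℕ) : ℕ := sInf {v | min a (Fintype.card ι) ≤ countLE F t v}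

lemma min_le_countLE_ordStat (a t : ℕ) :
    min a (Fintype.card ι) ≤ countLE F t (ordStat F a t) := by
  refine Nat.sInf_mem (s := {v | min a (Fintype.card ι) ≤ countLE F t v}) ⟨univ.sup (F · t), ?_⟩
  rw [Set.mem_ofPred_eq, countLE,
    filter_true_of_mem fun b _ => le_sup (f := (F · t)) (mem_univ b), card_univ]
  exact min_le_right _ _

lemma ordStat_le {a t v : ℕ} (h : min a (Fintype.card ι) ≤ countLE F t v) : ordStat F a t ≤ v :=
  Nat.sInf_le h

lemma monotone_ordStat : Monotone (ordStat F) := fun _ b hab t =>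
  ordStat_le F ((min_le_min_right _ hab).trans (min_le_countLE_ordStat F b t))

variable {F}

lemma countLE_le_of_le (hF : ∀ b, Monotone (F b)) {t u : ℕ} (htu : t ≤ u) (v : ℕ) :
    countLE F u v ≤ countLE F t v :=
  card_le_card fun b hb => by
    simp only [mem_filter, mem_univ, true_and] at hb ⊢
    exact (hF b htu).trans hb

lemma monotone_ordStat_apply (hF : ∀ b, Monotone (F b)) (a : ℕ) : Monotone (ordStat F a) :=
  fun _ u htu => ordStat_le F ((min_le_countLE_ordStat F a u).trans (countLE_le_of_le hF htu _))

lemma exists_mem_cellsFull_ordStat (hF : ∀ b, Monotone (F b)) {m t j : ℕ} {b : ι}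
    (h : (t, j) ∈ cellsFull m (F b)) :
    ∃ a ∈ Set.Icc 1 (Fintype.card ι), (t, j) ∈ cellsFull m (ordStat F a) := by
  obtain ⟨ht₁, htm, hlo, hhi⟩ := h
  have hb : b ∈ ({c | F c (t - 1) ≤ j} : Finset ι) := by simpa using hlo
  have hcard : countLE F (t - 1) j ≤ Fintype.card ι := card_le_univ _
  refine ⟨countLE F (t - 1) j, ⟨card_pos.2 ⟨b, hb⟩, hcard⟩, ht₁, htm,
    ordStat_le F (min_le_left _ _), ?_⟩
  by_contra! hlt
  -- `F b` leaves the sublevel set `{F · ≤ j}` between `t - 1` and `t`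
  have hss : ({c | F c t ≤ ordStat F (countLE F (t - 1) j) t} : Finset ι) ⊂
      ({c | F c (t - 1) ≤ j} : Finset ι) := by
    refine (ssubset_iff_of_subset fun c hc => ?_).2 ⟨b, hb, ?_⟩
    · simp only [mem_filter, mem_univ, true_and] at hc ⊢
      exact (hF c (Nat.sub_le t 1)).trans (hc.trans hlt.le)
    · simp only [mem_filter, mem_univ, true_and, not_le]
      exact hlt.trans_le hhi
  have := min_le_countLE_ordStat F (countLE F (t - 1) j) t
  rw [min_eq_left hcard] at this
  exact (card_lt_card hss).not_ge this

end OrderStatistics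

section Capping

variable {G : ℕ → ℕ → ℕ} {c : ℕ}

def capped (G : ℕ → ℕ → ℕ) (c a t : ℕ) : ℕ := min (G a t) (c + a)

lemma capped_le (a t : ℕ) : capped G c a t ≤ c + a := min_le_right _ _

lemma monotone_capped (hG : Monotone G) : Monotone (capped G c) := fun _ _ hab t =>
  min_le_min (hG hab t) (Nat.add_le_add_left hab c)

lemma monotone_capped_apply {a : ℕ} (hG : Monotone (G a)) : Monotone (capped G c a) :=
  fun _ _ htu => min_le_min_right _ (hG htu)

lemma exists_mem_cellsFull_capped (hG : Monotone G) {m a k t j : ℕ} (hak : a ≤ k)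
    (hjk : j ≤ c + k) (h : (t, j) ∈ cellsFull m (G a)) :
    ∃ b ∈ Set.Icc a k, (t, j) ∈ cellsFull m (capped G c b) := by
  obtain ⟨ht₁, htm, hlo, hhi⟩ := h
  by_cases hj : j ≤ c + a
  · exact ⟨a, ⟨le_rfl, hak⟩, ht₁, htm, (min_le_left _ _).trans hlo, le_min hhi hj⟩
  · exact ⟨j - c, ⟨by omega, by omega⟩, ht₁, htm, (capped_le _ _).trans (by omega),
      le_min (hhi.trans (hG (by omega) t)) (by omega)⟩

end Capping

section Stacking

def stack (G : ℕ → ℕ → ℕ) : ℕ → ℕ → ℕ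
  | 0, _ => 0
  | a + 1, t => max (G (a + 1) t) (stack G a (t + 1) + 1)

variable {G : ℕ → ℕ → ℕ}

lemma le_stack_succ (a t : ℕ) : G (a + 1) t ≤ stack G (a + 1) t := le_max_left _ _

lemma stack_lt_stack_succ_pred (a : ℕ) {t : ℕ} (ht : 1 ≤ t) :
    stack G a t < stack G (a + 1) (t - 1) := by
  rw [stack, Nat.sub_add_cancel ht]
  exact (Nat.lt_add_one _).trans_le (le_max_right _ _)

lemma one_le_stack_succ (a t : ℕ) : 1 ≤ stack G (a + 1) t :=
  (Nat.le_add_left 1 _).trans (le_max_right _ _)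

lemma stack_le {c : ℕ} (hG : ∀ a t, G a t ≤ c + a) (a t : ℕ) : stack G a t ≤ c + a := by
  induction a generalizing t with
  | zero => exact Nat.zero_le _
  | succ a ih => exact max_le (hG _ _) (by have := ih (t + 1); omega)

lemma monotone_stack (hG : ∀ a, Monotone (G a)) (a : ℕ) : Monotone (stack G a) := by
  induction a with
  | zero => exact monotone_const
  | succ a ih =>
    exact fun _ _ htu =>
      max_le_max (hG _ htu) (Nat.add_le_add_right (ih (Nat.add_le_add_right htu 1)) 1)

lemma stack_lt_stack_pred (hG : ∀ a, Monotone (G a)) {a b t : ℕ} (hab : a < b) (ht : 1 ≤ t) :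
    stack G a t < stack G b (t - 1) := by
  have hstrict : StrictMono (stack G · (t - 1)) := strictMono_nat_of_lt_succ fun a =>
    (monotone_stack hG a (Nat.le_succ _)).trans_lt
      (stack_lt_stack_succ_pred a (Nat.le_add_left 1 _))
  exact (stack_lt_stack_succ_pred a ht).trans_le (hstrict.monotone hab)

lemma exists_mem_cellsFull_stack (hG : Monotone G) {m a t j : ℕ} (ha : 1 ≤ a) (hj : 1 ≤ j)
    (h : (t, j) ∈ cellsFull m (G a)) :
    ∃ b ∈ Set.Icc 1 a, (t, j) ∈ cellsFull m (stack G b) := by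
  obtain ⟨ht₁, htm, hlo, hhi⟩ : 1 ≤ t ∧ t ≤ m ∧ G a (t - 1) ≤ j ∧ j ≤ G a t := h
  suffices ∀ a, G a (t - 1) ≤ j → j ≤ stack G a t →
      ∃ b ∈ Set.Icc 1 a, stack G b (t - 1) ≤ j ∧ j ≤ stack G b t by
    obtain ⟨b, hb, hblo, hbhi⟩ := this a hlo (by
      obtain ⟨a, rfl⟩ := Nat.exists_eq_add_of_le' ha
      exact hhi.trans (le_stack_succ a t))
    exact ⟨b, hb, ht₁, htm, hblo, hbhi⟩
  intro a
  induction a with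
  | zero => exact fun _ hj0 => absurd (hj.trans hj0) (Nat.not_succ_le_zero 0)
  | succ a ih =>
    intro hglo hshi
    by_cases hsucc : stack G (a + 1) (t - 1) ≤ j
    · exact ⟨a + 1, ⟨by omega, le_rfl⟩, hsucc, hshi⟩
    -- a cell pushed below `stack G (a + 1)` lies under `stack G a t`
    have hbelow : j ≤ stack G a t := by
      rw [stack, Nat.sub_add_cancel ht₁] at hsucc
      omega
    obtain ⟨b, ⟨hb₁, hba⟩, hcell⟩ := ih ((hG a.le_succ _).trans hglo) hbelow
    exact ⟨b, ⟨hb₁, hba.trans a.le_succ⟩, hcell⟩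

end Stacking

section Covering

variable {m n : ℕ} {ι : Type*} [Fintype ι] {F : ι → ℕ → ℕ}

theorem hasDisjointFullCover_of_card_le (hF : ∀ b, Monotone (F b))
    (hF₁ : ∀ b t, 1 ≤ F b t) (hFn : ∀ b t, F b t ≤ n) (hιn : Fintype.card ι ≤ n) :
    HasDisjointFullCover m n (⋃ b, cellsFull m (F b)) (Fintype.card ι) := by
  set G := capped (ordStat F) (n - Fintype.card ι)
  have hG : Monotone G := monotone_capped (monotone_ordStat F)
  have hGt : ∀ a, Monotone (G a) := fun a => monotone_capped_apply (monotone_ordStat_apply hF a)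
  refine hasDisjointFullCover_of_lt (fun a => stack G (a + 1))
    (fun a => ⟨fun t _ => ⟨one_le_stack_succ _ t,
      (stack_le (capped_le (G := ordStat F)) _ t).trans (by omega)⟩,
      fun _ _ htu _ => monotone_stack hGt _ htu⟩)
    (fun _ _ hab _ ht _ => stack_lt_stack_pred hGt (by simpa using hab) ht) ?_
  rintro ⟨t, j⟩ hx
  obtain ⟨b, hb⟩ := Set.mem_iUnion.1 hx
  obtain ⟨a, ⟨ha₁, hak⟩, hord⟩ := exists_mem_cellsFull_ordStat hF hb
  obtain ⟨a', ⟨haa', ha'k⟩, hcap⟩ :=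
    exists_mem_cellsFull_capped (c := n - Fintype.card ι) (monotone_ordStat F) hak
      (by have := hb.2.2.2.trans (hFn b t); omega) hord
  obtain ⟨d, ⟨hd₁, hda⟩, hstack⟩ :=
    exists_mem_cellsFull_stack hG (ha₁.trans haa') ((hF₁ b _).trans hb.2.2.1) hcap
  exact Set.mem_iUnion.2 ⟨⟨d - 1, by omega⟩, by simpa [Nat.sub_add_cancel hd₁] using hstack⟩

theorem exists_hasDisjointFullCover (hF : ∀ b, Monotone (F b)) (hF₁ : ∀ b t, 1 ≤ F b t)
    (hFn : ∀ b t, F b t ≤ n) :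
    ∃ k ≤ Fintype.card ι, HasDisjointFullCover m n (⋃ b, cellsFull m (F b)) k := by
  rcases le_total (Fintype.card ι) n with h | h
  · exact ⟨_, le_rfl, hasDisjointFullCover_of_card_le hF hF₁ hFn h⟩
  · exact ⟨n, h, (hasDisjointFullCover_rows m n).mono
      (Set.iUnion_subset fun b => cellsFull_subset_Icc_prod (hF₁ b) (hFn b))⟩

end Covering

theorem stmt9_general (m n i : ℕ)
    (I : Fin i → MonoPoly m n) (hI : ∀ a, (I a).Increasing) :
    ∃ i' : ℕ, i' ≤ i ∧ ∃ Q : Fin i' → (ℕ → ℕ),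
      (∀ a, IncFull m n (Q a)) ∧
      (∀ a b, a ≠ b → Disjoint (cellsFull m (Q a)) (cellsFull m (Q b))) ∧
      ((⋃ a, (I a).cells) ⊆ ⋃ a, cellsFull m (Q a)) := by
  obtain ⟨k, hk, hcover⟩ := exists_hasDisjointFullCover (m := m) (F := fun a => (I a).extend)
    (fun a => (I a).monotone_extend (hI a)) (fun a t => ((I a).extend_mem t).1)
    (fun a t => ((I a).extend_mem t).2)
  exact ⟨k, by simpa using hk,
    hcover.mono (Set.iUnion_mono fun a => (I a).cells_subset_cellsFull_extend (hI a))⟩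

/-- Given increasing polyominoes `I₁,…,I_i ⊆ R_{m×n}`, there are non-overlapping
increasing polyominoes `I'₁,…,I'_{i'}` (with `i' ≤ i`), fully defined on
`{0,…,m}`, whose union contains the union of the original ones. -/
theorem stmt9 (m n i : ℕ) (hm : 1 ≤ m) (hn : 1 ≤ n) (hi : 1 ≤ i)
    (I : Fin i → MonoPoly m n) (hI : ∀ a, (I a).Increasing) :
    ∃ i' : ℕ, i' ≤ i ∧ ∃ Q : Fin i' → (ℕ → ℕ),
      (∀ a, IncFull m n (Q a)) ∧
      (∀ a b, a ≠ b → Disjoint (cellsFull m (Q a)) (cellsFull m (Q b))) ∧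
      ((⋃ a, (I a).cells) ⊆ ⋃ a, cellsFull m (Q a)) :=
  stmt9_general m n i I hI
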